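/- There do not exist an open interval I, differentiable functions ξ₂, …, ξ_n : I → ℝ (n ≥ 4) and a differentiable function f : I → ℝ with f' ≠ 0, a real constant ρ, and three indices a, b, c ∈ {2,…,n} with ξ_a, ξ_b, ξ_c pairwise distinct at every point, such that: (i) ξᵢ' + ξᵢ² = ξⱼ' + ξⱼ² on I for all i, j; (ii) f'' = ρ + (n-1)(ξ₂' + ξ₂²) on I; and (iii) Σᵢ₌₂ⁿ ξᵢ² - ρ = (ξ_i + ξ_j)(Σᵢ₌₂ⁿ ξᵢ - f') on I for all pairs i ≠ j with ξ_i ≠ ξ_j pointwise. -/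

import Mathlib

/-!
Hypothesis (iii), applied to the pairs `(a, b)` and `(c, b)` with `ξ_a ≠ ξ_c`, forces
`Σ ξᵢ = f'`, and then `Σ ξᵢ² = ρ`. By (i) every `ξᵢ' + ξᵢ²` equals a common value `K`, so
differentiating `Σ ξᵢ = f'` gives `(n - 1) K - Σ ξᵢ² = f'' = ρ + (n - 1) K` by (ii), i.e.
`Σ ξᵢ² = -ρ`. Hence `Σ ξᵢ² = 0`, all `ξᵢ` vanish, and `ξ_a = ξ_b`.
-/

open Finset Filter Topology

lemma deriv_sum_eq_of_deriv_add_sq_eq {ι : Type*} {s : Finset ι} {ξ : ι → ℝ → ℝ} {K x : ℝ}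
    (hd : ∀ i ∈ s, DifferentiableAt ℝ (ξ i) x) (hK : ∀ i ∈ s, deriv (ξ i) x + ξ i x ^ 2 = K) :
    deriv (fun t => ∑ i ∈ s, ξ i t) x = #s * K - ∑ i ∈ s, ξ i x ^ 2 := by
  have hξ' : ∀ i ∈ s, deriv (ξ i) x = K - ξ i x ^ 2 := fun i hi => by linarith [hK i hi]
  rw [deriv_fun_sum hd, sum_congr rfl hξ', sum_sub_distrib, sum_const, nsmul_eq_mul]

lemma sum_sq_eq_neg_of_sum_eq_deriv {ι : Type*} {s : Finset ι} {ξ : ι → ℝ → ℝ} {f : ℝ → ℝ}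
    {U : Set ℝ} {ρ K x : ℝ} (hU : U ∈ 𝓝 x) (hS : ∀ t ∈ U, ∑ i ∈ s, ξ i t = deriv f t)
    (hd : ∀ i ∈ s, DifferentiableAt ℝ (ξ i) x) (hK : ∀ i ∈ s, deriv (ξ i) x + ξ i x ^ 2 = K)
    (hf : deriv (deriv f) x = ρ + #s * K) :
    ∑ i ∈ s, ξ i x ^ 2 = -ρ := by
  have h := (eventuallyEq_of_mem hU hS).deriv_eq
  rw [deriv_sum_eq_of_deriv_add_sq_eq hd hK, hf] at h
  linarith

lemma natCast_card_Icc_two {n : ℕ} (hn : 1 ≤ n) : (#(Icc 2 n) : ℝ) = n - 1 := by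
  rw [Nat.card_Icc, Nat.cast_sub (by omega)]
  push_cast
  ring

theorem stmt_2 : ¬ ∃ (n : ℕ) (_ : 4 ≤ n) (α β : ℝ) (_ : α < β)
    (ξ : ℕ → ℝ → ℝ) (f : ℝ → ℝ) (ρ : ℝ) (a b c : ℕ),
    a ∈ Finset.Icc 2 n ∧ b ∈ Finset.Icc 2 n ∧ c ∈ Finset.Icc 2 n ∧
    (∀ s ∈ Set.Ioo α β, ξ a s ≠ ξ b s) ∧
    (∀ s ∈ Set.Ioo α β, ξ a s ≠ ξ c s) ∧
    (∀ s ∈ Set.Ioo α β, ξ b s ≠ ξ c s) ∧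
    (∀ i ∈ Finset.Icc 2 n, ∀ s ∈ Set.Ioo α β, DifferentiableAt ℝ (ξ i) s) ∧
    (∀ s ∈ Set.Ioo α β, DifferentiableAt ℝ f s) ∧
    (∀ s ∈ Set.Ioo α β, DifferentiableAt ℝ (deriv f) s) ∧
    (∀ s ∈ Set.Ioo α β, deriv f s ≠ 0) ∧
    (∀ i ∈ Finset.Icc 2 n, ∀ j ∈ Finset.Icc 2 n, ∀ s ∈ Set.Ioo α β,
      deriv (ξ i) s + (ξ i s) ^ 2 = deriv (ξ j) s + (ξ j s) ^ 2) ∧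
    (∀ s ∈ Set.Ioo α β,
      deriv (deriv f) s = ρ + ((n : ℝ) - 1) * (deriv (ξ 2) s + (ξ 2 s) ^ 2)) ∧
    (∀ i ∈ Finset.Icc 2 n, ∀ j ∈ Finset.Icc 2 n, i ≠ j →
      (∀ s ∈ Set.Ioo α β, ξ i s ≠ ξ j s) →
      ∀ s ∈ Set.Ioo α β,
        (∑ l ∈ Finset.Icc 2 n, (ξ l s) ^ 2) - ρ =
          (ξ i s + ξ j s) * ((∑ l ∈ Finset.Icc 2 n, ξ l s) - deriv f s)) := by
  rintro ⟨n, hn, α, β, hαβ, ξ, f, ρ, a, b, c, ha, hb, hc, hab, hac, hbc,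
    hξ, -, -, -, hriccati, hf'', hiii⟩
  obtain ⟨x, hx⟩ := Set.nonempty_Ioo.mpr hαβ
  have hab' : a ≠ b := fun h => hab x hx (by rw [h])
  have hcb' : c ≠ b := fun h => hbc x hx (by rw [h])
  have hS : ∀ t ∈ Set.Ioo α β, ∑ l ∈ Icc 2 n, ξ l t = deriv f t := fun t ht => by
    have hab_t := hiii a ha b hb hab' hab t ht
    have hcb_t := hiii c hc b hb hcb' (fun t ht => (hbc t ht).symm) t ht
    have hac_t : ξ a t + ξ b t ≠ ξ c t + ξ b t := fun h => hac t ht (add_right_cancel h)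
    exact sub_eq_zero.mp ((mul_eq_mul_right_iff.mp (hab_t.symm.trans hcb_t)).resolve_left hac_t)
  have hQ : ∑ l ∈ Icc 2 n, ξ l x ^ 2 = ρ := by
    have h := hiii a ha b hb hab' hab x hx
    rwa [hS x hx, sub_self, mul_zero, sub_eq_zero] at h
  have hQ' : ∑ l ∈ Icc 2 n, ξ l x ^ 2 = -ρ :=
    sum_sq_eq_neg_of_sum_eq_deriv (isOpen_Ioo.mem_nhds hx) hS (fun l hl => hξ l hl x hx)
      (fun l hl => hriccati l hl 2 (mem_Icc.mpr ⟨le_rfl, by omega⟩) x hx)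
      (by rw [hf'' x hx, natCast_card_Icc_two (by omega)])
  have hzero : ∀ l ∈ Icc 2 n, ξ l x = 0 :=
    (sum_mul_self_eq_zero_iff _ _).mp (by simp only [← sq]; linarith)
  exact hab x hx (by rw [hzero a ha, hzero b hb])
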